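/- Fix reals α, β with α > −1, β > −1 and α − β > −1, and integers n, k, m, j with 0 ≤ k, k + 1 ≤ n, and 0 ≤ j ≤ m. Let Q_{n,k}(x,y) denote the derivative at α of the map a ↦ P^{(a,β)}_{n,k}(x,y), where P denotes the Laguerre–Laguerre Koornwinder polynomials. If j ≠ k, or if j = k and m ≥ n, then ∫_0^∞∫_0^∞ P^{(α,β)}_{m,j}(x,y) · Q_{n,k}(x,y) · x^{α−β} y^{β} e^{−(x+y/x)} dy dx = 0; and if j = k and n > m ≥ k, then this integral equals (1/(n−m)) · t_{m,k}^{(α,β)}. -/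

import Mathlib

/-!
For `x > 0` the substitution `y = x t` separates the double integral: the inner integral is
`x ^ (β + 1)` times the Laguerre inner product `∫ L_j^β L_k^β t^β e^{-t}`, which vanishes unless
`j = k`, and what is left is `∫ L_{m-k}^γ (∂_γ L_{n-k}^γ) x^γ e^{-x}` with `γ = α + 2k + 1`.
The parameter derivative of a Laguerre polynomial is `∂_γ L_N^γ = ∑_{m<N} L_m^γ / (N - m)`, so
orthogonality of the `L_m^γ` evaluates this last integral. Orthogonality itself follows from the
moments `∫ L_N^γ(t) t^r t^γ e^{-t} dt = (-1)^N (r choose N) Γ(γ + r + 1)`, whose coefficient sum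
is an `N`-th forward difference of `t ↦ (t)_r`.
-/

open Finset MeasureTheory Real

/-- Pochhammer symbol `(a)_m = a (a+1) ⋯ (a+m-1)`. -/
noncomputable def poch (a : ℝ) (m : ℕ) : ℝ := ∏ i ∈ Finset.range m, (a + i)

/-- Jacobi polynomial `P_n^{(α,β)}(x)`. -/
noncomputable def jacobiP (α β : ℝ) (n : ℕ) (x : ℝ) : ℝ :=
  ∑ i ∈ Finset.range (n + 1),
    poch (α + i + 1) (n - i) * poch (n + α + β + 1) i /
      ((Nat.factorial (n - i) : ℝ) * (Nat.factorial i : ℝ)) * ((x - 1) / 2) ^ i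

/-- Generalized Laguerre polynomial `L_n^{(α)}(x)`. -/
noncomputable def laguerreL (α : ℝ) (n : ℕ) (x : ℝ) : ℝ :=
  ∑ i ∈ Finset.range (n + 1),
    poch (α + i + 1) (n - i) / ((Nat.factorial (n - i) : ℝ) * (Nat.factorial i : ℝ)) * (-x) ^ i

/-- Laguerre–Laguerre Koornwinder polynomial
`P^{(α,β)}_{n,k}(x,y) = L^{(α+2k+1)}_{n-k}(x) · x^k · L^{(β)}_k(y/x)`. -/
noncomputable def llP (α β : ℝ) (n k : ℕ) (x y : ℝ) : ℝ :=
  laguerreL (α + 2 * k + 1) (n - k) x * x ^ k * laguerreL β k (y / x)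

/-- Squared norm constant `t_{n,k}^{(α,β)}` of the Laguerre–Laguerre Koornwinder polynomials. -/
noncomputable def tconst (α β : ℝ) (n k : ℕ) : ℝ :=
  Real.Gamma (β + k + 1) * Real.Gamma (α + n + k + 2) /
    ((Nat.factorial k : ℝ) * (Nat.factorial (n - k) : ℝ))

open scoped Nat fwdDiff

lemma poch_succ (z : ℝ) (r : ℕ) : poch z (r + 1) = poch z r * (z + r) :=
  prod_range_succ _ _

lemma poch_succ' (z : ℝ) (r : ℕ) : poch z (r + 1) = z * poch (z + 1) r := by
  simp only [poch, prod_range_succ', Nat.cast_add, Nat.cast_one, Nat.cast_zero, add_zero]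
  rw [mul_comm]
  congr 1
  exact prod_congr rfl fun i _ => by ring

lemma poch_add_one_sub_poch (z : ℝ) (r : ℕ) :
    poch (z + 1) r - poch z r = r * poch (z + 1) (r - 1) := by
  cases r with
  | zero => simp [poch]
  | succ r =>
    rw [poch_succ, poch_succ', Nat.add_sub_cancel]
    push_cast
    ring

lemma poch_mul_Gamma {z : ℝ} (hz : 0 < z) (r : ℕ) : poch z r * Gamma z = Gamma (z + r) := by
  induction r with
  | zero => simp [poch]
  | succ r ih =>
    rw [poch_succ, mul_right_comm, ih, Nat.cast_succ, ← add_assoc,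
      Real.Gamma_add_one (by positivity)]
    ring

lemma fwdDiff_iter_poch (N r : ℕ) (z : ℝ) :
    (Δ_[1])^[N] (fun t => poch t r) z = r.descFactorial N * poch (z + N) (r - N) := by
  induction N generalizing r z with
  | zero => simp
  | succ N ih =>
    have hΔ : Δ_[1] (fun t => poch t r) = (r : ℝ) • fun t => poch (t + 1) (r - 1) := by
      funext t
      simp [fwdDiff, poch_add_one_sub_poch]
    rw [Function.iterate_succ_apply, hΔ, fwdDiff_iter_const_smul, Pi.smul_apply,
      fwdDiff_iter_comp_add (f := fun t => poch t (r - 1)), ih, smul_eq_mul]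
    cases r with
    | zero => simp
    | succ r =>
      rw [Nat.succ_descFactorial_succ, Nat.add_sub_cancel, Nat.add_sub_add_right]
      push_cast
      ring_nf

lemma sum_range_alternating_choose_mul_poch (N r : ℕ) (z : ℝ) :
    ∑ i ∈ range (N + 1), (-1) ^ i * N.choose i * poch (z + i) r
      = (-1) ^ N * r.descFactorial N * poch (z + N) (r - N) := by
  rw [mul_assoc, ← fwdDiff_iter_poch, fwdDiff_iter_eq_sum_shift, mul_sum]
  refine sum_congr rfl fun i hi => ?_
  obtain ⟨d, rfl⟩ := Nat.exists_eq_add_of_le (Nat.lt_succ_iff.mp (mem_range.mp hi))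
  have hsign : ((-1 : ℝ) ^ d) ^ 2 = 1 := by rw [← pow_mul, pow_mul', neg_one_sq, one_pow]
  rw [zsmul_eq_mul, nsmul_one, Nat.add_sub_cancel_left]
  push_cast
  linear_combination -(-1) ^ i * (((i + d).choose i : ℕ) : ℝ) * poch (z + i) r * hsign

noncomputable def laguerreCoeff (α : ℝ) (n i : ℕ) : ℝ :=
  (-1) ^ i * poch (α + i + 1) (n - i) / ((n - i)! * i !)

lemma laguerreL_eq_sum (α : ℝ) (n : ℕ) (x : ℝ) :
    laguerreL α n x = ∑ i ∈ range (n + 1), laguerreCoeff α n i * x ^ i :=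
  sum_congr rfl fun i _ => by rw [laguerreCoeff, neg_pow]; ring

lemma sum_laguerreCoeff_mul_Gamma {γ : ℝ} (hγ : -1 < γ) (N r : ℕ) :
    ∑ i ∈ range (N + 1), laguerreCoeff γ N i * Gamma (γ + i + r + 1)
      = (-1) ^ N * r.choose N * Gamma (γ + r + 1) := by
  have hterm : ∀ i ∈ range (N + 1), laguerreCoeff γ N i * Gamma (γ + i + r + 1)
      = Gamma (γ + N + 1) / N ! * ((-1) ^ i * N.choose i * poch (γ + 1 + i) r) := by
    intro i hi
    have hiN : i ≤ N := Nat.lt_succ_iff.mp (mem_range.mp hi)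
    have hz : 0 < γ + i + 1 := by linarith [(Nat.cast_nonneg i : (0 : ℝ) ≤ i)]
    have hN : poch (γ + i + 1) (N - i) * Gamma (γ + i + 1) = Gamma (γ + N + 1) := by
      rw [poch_mul_Gamma hz, Nat.cast_sub hiN]; ring_nf
    have hr : Gamma (γ + i + r + 1) = poch (γ + 1 + i) r * Gamma (γ + i + 1) := by
      rw [show γ + 1 + i = γ + i + 1 by ring, poch_mul_Gamma hz]; ring_nf
    have hC : (N.choose i : ℝ) * i ! * (N - i)! = N ! := by
      exact_mod_cast Nat.choose_mul_factorial_mul_factorial hiN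
    have hC₀ : (N.choose i : ℝ) ≠ 0 := by exact_mod_cast (Nat.choose_pos hiN).ne'
    rw [laguerreCoeff, hr, ← hN, ← hC]
    field_simp
  rw [sum_congr rfl hterm, ← mul_sum, sum_range_alternating_choose_mul_poch]
  rcases le_or_gt N r with hNr | hrN
  · have hz : 0 < γ + 1 + N := by linarith [(Nat.cast_nonneg N : (0 : ℝ) ≤ N)]
    have hr : poch (γ + 1 + N) (r - N) * Gamma (γ + N + 1) = Gamma (γ + r + 1) := by
      rw [show γ + N + 1 = γ + 1 + N by ring, poch_mul_Gamma hz, Nat.cast_sub hNr]; ring_nf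
    rw [Nat.descFactorial_eq_factorial_mul_choose, ← hr]
    push_cast
    field_simp
  · simp [Nat.descFactorial_eq_zero_iff_lt.mpr hrN, Nat.choose_eq_zero_of_lt hrN]

lemma sum_poch_div_factorial_div_sub_succ_mul (z : ℝ) (n : ℕ) :
    (∑ l ∈ range (n + 1), poch z l / l ! / (((n + 1 : ℕ) : ℝ) - l)) * (n + 1)
      = (∑ l ∈ range n, poch z l / l ! / (n - l)) * (z + n) + poch z n / n ! := by
  set c : ℕ → ℝ := fun l => poch z l / l ! with hc_def
  have hc : ∀ l : ℕ, (l + 1) * c (l + 1) = (z + l) * c l := by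
    intro l; simp only [hc_def, poch_succ, Nat.factorial_succ]; push_cast; field_simp
  have h1 : (∑ l ∈ range (n + 1), c l / (((n + 1 : ℕ) : ℝ) - l)) * (n + 1)
      = ∑ l ∈ range (n + 1), l * c l / (((n + 1 : ℕ) : ℝ) - l) + ∑ l ∈ range (n + 1), c l := by
    rw [sum_mul, ← sum_add_distrib]
    refine sum_congr rfl fun l hl => ?_
    have : (l : ℝ) < n + 1 := by exact_mod_cast mem_range.mp hl
    have : ((n + 1 : ℕ) : ℝ) - l ≠ 0 := by push_cast; linarith
    field_simp
    push_cast
    ring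
  have h2 : ∑ l ∈ range (n + 1), l * c l / (((n + 1 : ℕ) : ℝ) - l)
      = ∑ l ∈ range n, (z + l) * c l / (n - l) := by
    rw [sum_range_succ']
    simp only [Nat.cast_zero, zero_mul, zero_div, add_zero]
    refine sum_congr rfl fun l _ => ?_
    rw [← hc]
    push_cast
    ring_nf
  have h3 : (∑ l ∈ range n, c l / (n - l)) * (z + n)
      = ∑ l ∈ range n, (z + l) * c l / (n - l) + ∑ l ∈ range n, c l := by
    rw [sum_mul, ← sum_add_distrib]
    refine sum_congr rfl fun l hl => ?_
    have : (l : ℝ) < n := by exact_mod_cast mem_range.mp hl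
    have : (n : ℝ) - l ≠ 0 := by linarith
    field_simp
    ring
  rw [h1, h2, h3, sum_range_succ c]
  ring

lemma hasDerivAt_poch_div_factorial (z : ℝ) (n : ℕ) :
    HasDerivAt (fun t => poch t n / n !) (∑ l ∈ range n, poch z l / l ! / (n - l)) z := by
  induction n with
  | zero => simpa [poch] using hasDerivAt_const z (1 : ℝ)
  | succ n ih =>
    have hstep : (fun t => poch t (n + 1) / (n + 1)!)
        = fun t => poch t n / n ! * ((t + n) / (n + 1)) := by
      funext t; rw [poch_succ, Nat.factorial_succ]; push_cast; field_simp
    have hderiv : ∑ l ∈ range (n + 1), poch z l / l ! / (((n + 1 : ℕ) : ℝ) - l)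
        = (∑ l ∈ range n, poch z l / l ! / (n - l)) * ((z + n) / (n + 1))
          + poch z n / n ! * (1 / (n + 1)) := by
      rw [(eq_div_iff (by positivity)).mpr (sum_poch_div_factorial_div_sub_succ_mul z n)]
      ring
    rw [hstep, hderiv]
    exact ih.mul (((hasDerivAt_id z).add_const (n : ℝ)).div_const _)

lemma hasDerivAt_laguerreL_param (α x : ℝ) (N : ℕ) :
    HasDerivAt (fun a => laguerreL a N x) (∑ m ∈ range N, laguerreL α m x / (N - m)) α := by
  have hterm : ∀ i ∈ range (N + 1), HasDerivAt
      (fun a => poch (a + i + 1) (N - i) / ((N - i)! * i !) * (-x) ^ i)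
      ((∑ l ∈ range (N - i), poch (α + (i + 1)) l / l ! / ((N - i : ℕ) - l)) / i ! * (-x) ^ i)
      α := by
    intro i _
    have h := (((hasDerivAt_poch_div_factorial (α + (i + 1)) (N - i)).comp_add_const α
      (i + 1)).div_const (i ! : ℝ)).mul_const ((-x) ^ i)
    have hf : (fun a => poch (a + i + 1) (N - i) / ((N - i)! * i !) * (-x) ^ i)
        = fun a => poch (a + (i + 1)) (N - i) / (N - i)! / i ! * (-x) ^ i := by
      funext a
      rw [add_assoc, div_div]
    rw [hf]
    exact h
  refine (HasDerivAt.fun_sum hterm).congr_deriv ?_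
  -- swap the sums over `i ≤ m < N` and reindex the inner one by `m = i + l`
  simp only [laguerreL, sum_div]
  rw [sum_comm' (t' := range (N + 1)) (s' := fun i => Ico i N) (h := fun m i => by
    simp only [mem_range, mem_Ico]; omega)]
  refine sum_congr rfl fun i hi => ?_
  have hiN : i ≤ N := Nat.lt_succ_iff.mp (mem_range.mp hi)
  rw [sum_Ico_eq_sum_range, sum_mul]
  refine sum_congr rfl fun l _ => ?_
  rw [Nat.add_sub_cancel_left, ← add_assoc α]
  push_cast [Nat.cast_sub hiN]
  ring

lemma pow_mul_rpow_mul_exp_neg_eq {t : ℝ} (ht : 0 < t) (s : ℝ) (q : ℕ) :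
    t ^ q * (t ^ s * exp (-t)) = exp (-t) * t ^ (s + q + 1 - 1) := by
  rw [add_sub_cancel_right, rpow_add ht, rpow_natCast]
  ring

lemma integrableOn_pow_mul_rpow_mul_exp_neg {s : ℝ} (hs : -1 < s) (q : ℕ) :
    IntegrableOn (fun t => t ^ q * (t ^ s * exp (-t))) (Set.Ioi 0) :=
  (GammaIntegral_convergent (s := s + q + 1) (by linarith [q.cast_nonneg (α := ℝ)])).congr_fun
    (fun _ ht => (pow_mul_rpow_mul_exp_neg_eq ht s q).symm) measurableSet_Ioi

lemma integral_pow_mul_rpow_mul_exp_neg {s : ℝ} (hs : -1 < s) (q : ℕ) :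
    ∫ t in Set.Ioi 0, t ^ q * (t ^ s * exp (-t)) = Gamma (s + q + 1) := by
  rw [Gamma_eq_integral (by linarith [q.cast_nonneg (α := ℝ)])]
  exact setIntegral_congr_fun measurableSet_Ioi fun _ ht => pow_mul_rpow_mul_exp_neg_eq ht s q

lemma integrableOn_laguerreL_mul_pow_mul_rpow_mul_exp_neg {s : ℝ} (hs : -1 < s) (α : ℝ)
    (n q : ℕ) :
    IntegrableOn (fun t => laguerreL α n t * t ^ q * (t ^ s * exp (-t))) (Set.Ioi 0) := by
  simp_rw [laguerreL_eq_sum, sum_mul]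
  refine integrable_finsetSum _ fun i _ => ?_
  simpa only [pow_add, mul_assoc] using
    (integrableOn_pow_mul_rpow_mul_exp_neg hs (i + q)).const_mul (laguerreCoeff α n i)

lemma integrableOn_laguerreL_mul_laguerreL_mul_rpow_mul_exp_neg {s : ℝ} (hs : -1 < s)
    (α α' : ℝ) (M N : ℕ) :
    IntegrableOn (fun t => laguerreL α M t * laguerreL α' N t * (t ^ s * exp (-t)))
      (Set.Ioi 0) := by
  simp_rw [laguerreL_eq_sum α' N, mul_sum, sum_mul]
  refine integrable_finsetSum _ fun p _ => ?_
  simpa only [mul_assoc, mul_left_comm] using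
    (integrableOn_laguerreL_mul_pow_mul_rpow_mul_exp_neg hs α M p).const_mul
      (laguerreCoeff α' N p)

lemma integral_laguerreL_mul_pow_mul_rpow_mul_exp_neg {γ : ℝ} (hγ : -1 < γ) (N r : ℕ) :
    ∫ t in Set.Ioi 0, laguerreL γ N t * t ^ r * (t ^ γ * exp (-t))
      = (-1) ^ N * r.choose N * Gamma (γ + r + 1) := by
  have hterm : ∀ i : ℕ, (fun t => laguerreCoeff γ N i * t ^ i * t ^ r * (t ^ γ * exp (-t)))
      = fun t => laguerreCoeff γ N i * (t ^ (i + r) * (t ^ γ * exp (-t))) := fun i => by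
    funext t; rw [pow_add]; ring
  simp_rw [laguerreL_eq_sum, sum_mul]
  rw [integral_finsetSum _ fun i _ => by
    rw [hterm]; exact (integrableOn_pow_mul_rpow_mul_exp_neg hγ _).const_mul _]
  simp_rw [hterm, integral_const_mul, integral_pow_mul_rpow_mul_exp_neg hγ]
  rw [← sum_laguerreCoeff_mul_Gamma hγ]
  push_cast
  simp_rw [add_assoc]

lemma integral_laguerreL_mul_laguerreL_of_le {γ : ℝ} (hγ : -1 < γ) {M N : ℕ} (hNM : N ≤ M) :
    ∫ t in Set.Ioi 0, laguerreL γ M t * laguerreL γ N t * (t ^ γ * exp (-t))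
      = if M = N then Gamma (γ + M + 1) / M ! else 0 := by
  have hterm : ∀ p : ℕ,
      (fun t => laguerreL γ M t * (laguerreCoeff γ N p * t ^ p) * (t ^ γ * exp (-t)))
        = fun t => laguerreCoeff γ N p * (laguerreL γ M t * t ^ p * (t ^ γ * exp (-t))) :=
    fun p => by funext t; ring
  simp_rw [laguerreL_eq_sum γ N, mul_sum, sum_mul]
  rw [integral_finsetSum _ fun p _ => by
    rw [hterm]; exact (integrableOn_laguerreL_mul_pow_mul_rpow_mul_exp_neg hγ _ _ _).const_mul _]
  simp_rw [hterm, integral_const_mul, integral_laguerreL_mul_pow_mul_rpow_mul_exp_neg hγ]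
  have hsingle : ∀ p ∈ range (N + 1),
      laguerreCoeff γ N p * ((-1) ^ M * p.choose M * Gamma (γ + p + 1))
        = if M = p then Gamma (γ + M + 1) / M ! else 0 := by
    intro p hp
    have hpN : p ≤ N := Nat.lt_succ_iff.mp (mem_range.mp hp)
    split_ifs with hMp
    · subst hMp
      obtain rfl : N = M := le_antisymm hNM hpN
      have hsign : ((-1 : ℝ) ^ N) ^ 2 = 1 := by rw [← pow_mul, pow_mul', neg_one_sq, one_pow]
      simp only [laguerreCoeff, Nat.sub_self, poch, range_zero, prod_empty, Nat.factorial_zero,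
        Nat.choose_self]
      push_cast
      field_simp
      linear_combination Gamma (γ + N + 1) * hsign
    · rw [Nat.choose_eq_zero_of_lt (by omega), Nat.cast_zero]
      ring
  rw [sum_congr rfl hsingle, sum_ite_eq]
  exact if_congr (by rw [mem_range]; omega) rfl rfl

lemma integral_laguerreL_mul_laguerreL {γ : ℝ} (hγ : -1 < γ) (M N : ℕ) :
    ∫ t in Set.Ioi 0, laguerreL γ M t * laguerreL γ N t * (t ^ γ * exp (-t))
      = if M = N then Gamma (γ + M + 1) / M ! else 0 := by
  rcases le_total N M with hNM | hMN
  · exact integral_laguerreL_mul_laguerreL_of_le hγ hNM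
  · simp_rw [mul_comm (laguerreL γ M _)]
    rw [integral_laguerreL_mul_laguerreL_of_le hγ hMN]
    by_cases h : M = N
    · subst h; rfl
    · rw [if_neg (Ne.symm h), if_neg h]

lemma integral_laguerreL_mul_deriv_laguerreL {γ : ℝ} (hγ : -1 < γ) (M N : ℕ) :
    ∫ t in Set.Ioi 0, laguerreL γ M t * deriv (fun a => laguerreL a N t) γ * (t ^ γ * exp (-t))
      = if M < N then Gamma (γ + M + 1) / M ! / (N - M) else 0 := by
  have hterm : ∀ m : ℕ,
      (fun t => laguerreL γ M t * (laguerreL γ m t / (N - m)) * (t ^ γ * exp (-t)))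
        = fun t => laguerreL γ M t * laguerreL γ m t * (t ^ γ * exp (-t)) / (N - m) :=
    fun m => by funext t; ring
  simp_rw [(hasDerivAt_laguerreL_param γ _ N).deriv, mul_sum, sum_mul]
  rw [integral_finsetSum _ fun m _ => by
    rw [hterm]
    exact (integrableOn_laguerreL_mul_laguerreL_mul_rpow_mul_exp_neg hγ _ _ _ _).div_const _]
  simp_rw [hterm, integral_div, integral_laguerreL_mul_laguerreL hγ, ite_div, zero_div]
  rw [sum_ite_eq, if_congr mem_range rfl rfl]

lemma integral_Ioi_zero_comp_div {x : ℝ} (hx : 0 < x) (f : ℝ → ℝ) :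
    ∫ y in Set.Ioi 0, f (y / x) = x * ∫ t in Set.Ioi 0, f t := by
  simpa only [div_eq_inv_mul, mul_zero, inv_inv, smul_eq_mul] using
    integral_comp_mul_left_Ioi f 0 (inv_pos.mpr hx)

lemma integral_Ioi_zero_comp_div_mul_rpow_mul_exp {x : ℝ} (hx : 0 < x) (h : ℝ → ℝ) (s : ℝ) :
    ∫ y in Set.Ioi 0, h (y / x) * (y ^ s * exp (-(y / x)))
      = x ^ (s + 1) * ∫ t in Set.Ioi 0, h t * (t ^ s * exp (-t)) := by
  have hy : ∀ y ∈ Set.Ioi (0 : ℝ), h (y / x) * (y ^ s * exp (-(y / x)))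
      = x ^ s * (h (y / x) * ((y / x) ^ s * exp (-(y / x)))) := fun y hy => by
    rw [div_rpow (le_of_lt hy) hx.le]
    field_simp
  rw [setIntegral_congr_fun measurableSet_Ioi hy, integral_const_mul,
    integral_Ioi_zero_comp_div hx (fun t => h t * (t ^ s * exp (-t))), rpow_add_one hx.ne']
  ring

lemma deriv_llP_param (α β : ℝ) (n k : ℕ) (x y : ℝ) :
    deriv (fun a => llP a β n k x y) α
      = deriv (fun a => laguerreL a (n - k) x) (α + 2 * k + 1) * x ^ k * laguerreL β k (y / x) := by
  simp only [llP, deriv_mul_const_field]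
  simp_rw [add_assoc]
  exact congrArg (· * x ^ k * laguerreL β k (y / x))
    (deriv_comp_add_const (f := fun a => laguerreL a (n - k) x) _ α)

lemma integral_llP_mul_deriv_llP (α β : ℝ) (m j n k : ℕ) :
    ∫ x in Set.Ioi 0, ∫ y in Set.Ioi 0,
        llP α β m j x y * deriv (fun a => llP a β n k x y) α *
          (x ^ (α - β) * y ^ β * exp (-(x + y / x)))
      = (∫ t in Set.Ioi 0, laguerreL β j t * laguerreL β k t * (t ^ β * exp (-t))) *
        ∫ x in Set.Ioi 0, laguerreL (α + 2 * j + 1) (m - j) x *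
          deriv (fun a => laguerreL a (n - k) x) (α + 2 * k + 1) *
            (x ^ (α + j + k + 1) * exp (-x)) := by
  rw [← integral_const_mul]
  refine setIntegral_congr_fun measurableSet_Ioi fun x (hx : 0 < x) => ?_
  set A := laguerreL (α + 2 * j + 1) (m - j) x
  set D := deriv (fun a => laguerreL a (n - k) x) (α + 2 * k + 1)
  have hy : ∀ y, llP α β m j x y * deriv (fun a => llP a β n k x y) α *
        (x ^ (α - β) * y ^ β * exp (-(x + y / x)))
      = A * D * x ^ j * x ^ k * x ^ (α - β) * exp (-x) *
        ((fun t => laguerreL β j t * laguerreL β k t) (y / x) * (y ^ β * exp (-(y / x)))) :=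
    fun y => by
      rw [deriv_llP_param, llP, neg_add, exp_add]
      ring
  have hpow : x ^ j * x ^ k * x ^ (α - β) * x ^ (β + 1) = x ^ (α + j + k + 1) := by
    rw [← rpow_natCast, ← rpow_natCast, ← rpow_add hx, ← rpow_add hx, ← rpow_add hx]
    ring_nf
  have hinner := integral_Ioi_zero_comp_div_mul_rpow_mul_exp hx
    (fun t => laguerreL β j t * laguerreL β k t) β
  simp only at hy hinner
  simp_rw [hy]
  rw [integral_const_mul, hinner, ← hpow]
  ring

theorem ll_inner_paramDerivAlpha_general
    (α β : ℝ) (hα : α > -1) (hβ : β > -1) (n k m j : ℕ) :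
    ((j ≠ k ∨ (j = k ∧ m ≥ n)) →
      ∫ x in Set.Ioi (0 : ℝ), ∫ y in Set.Ioi (0 : ℝ),
          llP α β m j x y * deriv (fun a : ℝ => llP a β n k x y) α *
            (x ^ (α - β) * y ^ β * Real.exp (-(x + y / x))) = 0) ∧
    ((j = k ∧ n > m ∧ m ≥ k) →
      ∫ x in Set.Ioi (0 : ℝ), ∫ y in Set.Ioi (0 : ℝ),
          llP α β m j x y * deriv (fun a : ℝ => llP a β n k x y) α *
            (x ^ (α - β) * y ^ β * Real.exp (-(x + y / x)))
        = (1 / ((n : ℝ) - m)) * tconst α β m k) := by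
  have hγ : -1 < α + 2 * k + 1 := by linarith [k.cast_nonneg (α := ℝ)]
  have hweight : α + k + k + 1 = α + 2 * k + 1 := by ring
  refine ⟨?_, ?_⟩
  · rintro (hjk | ⟨rfl, hmn⟩)
    · rw [integral_llP_mul_deriv_llP, integral_laguerreL_mul_laguerreL hβ, if_neg hjk, zero_mul]
    · rw [integral_llP_mul_deriv_llP, hweight, integral_laguerreL_mul_deriv_laguerreL hγ,
        if_neg (by omega), mul_zero]
  · rintro ⟨rfl, hnm, hmj⟩
    rw [integral_llP_mul_deriv_llP, hweight, integral_laguerreL_mul_deriv_laguerreL hγ,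
      integral_laguerreL_mul_laguerreL hβ, if_pos rfl, if_pos (by omega), tconst,
      Nat.cast_sub hmj, Nat.cast_sub (hmj.trans hnm.le)]
    have hnm' : (n : ℝ) - m ≠ 0 := sub_ne_zero.mpr (by exact_mod_cast hnm.ne')
    rw [show α + 2 * j + 1 + (m - j) + 1 = α + m + j + 2 by ring,
      show (n : ℝ) - j - (m - j) = n - m by ring]
    field_simp

/-- Inner products of Laguerre–Laguerre Koornwinder polynomials with the parameter derivative
(in `α`) of another one. -/
theorem ll_inner_paramDerivAlpha
    (α β : ℝ) (hα : α > -1) (hβ : β > -1) (hαβ : α - β > -1) (n k m j : ℕ)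
    (hk : 0 ≤ k) (hkn : k + 1 ≤ n) (hj : 0 ≤ j) (hjm : j ≤ m) :
    ((j ≠ k ∨ (j = k ∧ m ≥ n)) →
      ∫ x in Set.Ioi (0 : ℝ), ∫ y in Set.Ioi (0 : ℝ),
          llP α β m j x y * deriv (fun a : ℝ => llP a β n k x y) α *
            (x ^ (α - β) * y ^ β * Real.exp (-(x + y / x))) = 0) ∧
    ((j = k ∧ n > m ∧ m ≥ k) →
      ∫ x in Set.Ioi (0 : ℝ), ∫ y in Set.Ioi (0 : ℝ),
          llP α β m j x y * deriv (fun a : ℝ => llP a β n k x y) α *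
            (x ^ (α - β) * y ^ β * Real.exp (-(x + y / x)))
        = (1 / ((n : ℝ) - m)) * tconst α β m k) :=
  ll_inner_paramDerivAlpha_general α β hα hβ n k m j
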